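/- arXiv:2310.17385 — 5 statements merged into one kernel-verified Lean document; each statement's English description precedes it below -/
import Mathlib

section
/- Consider exponential weights (Hedge) on K ≥ 2 experts over M rounds: given loss vectors ℓ_1,…,ℓ_M ∈ ℝ^K with ‖ℓ_t‖_∞ ≤ c_t and a constant β > 0 with c_t ≤ β for all t, define the probability vectors p_t ∈ Δ_K by p_t^{(k)} = exp(−(√(ln K)/(β√t)) Σ_{s=1}^{t−1} ℓ_s^{(k)}) / Σ_{k'} exp(−(√(ln K)/(β√t)) Σ_{s=1}^{t−1} ℓ_s^{(k')}). Then for every expert k ∈ {1,…,K}: Σ_{t=1}^M ⟨ℓ_t, p_t⟩ − Σ_{t=1}^M ℓ_t^{(k)} ≤ 2 β √(M ln K). -/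
/-!
The potential is the mix loss `-(1/η) log ((1/K) ∑ⱼ exp (-η Lⱼ))` of the cumulative losses `L`.
By Hoeffding's lemma, applied to the loss of an expert drawn from the Hedge weights, the expected
loss of round `t` is at most the increase of the potential at rate `η t` plus `η t β² / 2`.
By the power-mean inequality the mix loss does not increase with `η`, so decreasing the rate
from `η (t - 1)` to `η t` only helps and the increases telescope. The final potential is at most
`L k + log K / η (M - 1)`. With `η t = √(log K) / (β √(t + 1))`, this last term and
`∑ₜ η t β² / 2 ≤ β √(log K) √M` are each at most `β √(M log K)`.
-/

open Real Finset

open ProbabilityTheory MeasureTheory in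
lemma sum_mul_exp_le_of_abs_le {ι : Type*} [Fintype ι] {q x : ι → ℝ} (hq0 : ∀ j, 0 ≤ q j)
    (hq1 : ∑ j, q j = 1) {c : ℝ} (hx : ∀ j, |x j| ≤ c) (t : ℝ) :
    ∑ j, q j * exp (t * x j) ≤ exp (t * ∑ j, q j * x j + c ^ 2 * t ^ 2 / 2) := by
  let _ : MeasurableSpace ι := ⊤
  let P : PMF ι := PMF.ofFintype (fun j => ENNReal.ofReal (q j)) (by
    rw [← ENNReal.ofReal_sum_of_nonneg fun j _ => hq0 j, hq1, ENNReal.ofReal_one])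
  have hP : ∀ j, (P j).toReal = q j := fun j => ENNReal.toReal_ofReal (hq0 j)
  have hmgf := (hasSubgaussianMGF_of_mem_Icc (μ := P.toMeasure) (X := x) (a := -c) (b := c)
    Measurable.of_discrete.aemeasurable (ae_of_all _ fun j => abs_le.mp (hx j))).mgf_le t
  have hvar : (((‖c - -c‖₊ / 2) ^ 2 : NNReal) : ℝ) = c ^ 2 := by
    simp only [NNReal.coe_pow, NNReal.coe_div, coe_nnnorm, Real.norm_eq_abs, div_pow, sq_abs]
    norm_num
    ring
  simp only [mgf, PMF.integral_eq_sum, hP, smul_eq_mul, hvar] at hmgf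
  set m := ∑ j, q j * x j
  calc ∑ j, q j * exp (t * x j) = exp (t * m) * ∑ j, q j * exp (t * (x j - m)) := by
        rw [mul_sum]
        refine sum_congr rfl fun j _ => ?_
        rw [mul_sub, exp_sub]
        field_simp
    _ ≤ exp (t * m) * exp (c ^ 2 * t ^ 2 / 2) := by gcongr
    _ = _ := (exp_add _ _).symm

section Hedge

variable {ι : Type*}

noncomputable def cumLoss (ℓ : ℕ → ι → ℝ) (t : ℕ) : ι → ℝ := ∑ s ∈ range t, ℓ s

@[simp]
lemma cumLoss_zero (ℓ : ℕ → ι → ℝ) : cumLoss ℓ 0 = 0 := sum_range_zero _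

lemma cumLoss_succ (ℓ : ℕ → ι → ℝ) (t : ℕ) : cumLoss ℓ (t + 1) = cumLoss ℓ t + ℓ t :=
  sum_range_succ _ _

variable [Fintype ι]

noncomputable def hedgeWeights (η : ℝ) (L : ι → ℝ) (j : ι) : ℝ :=
  exp (-η * L j) / ∑ i, exp (-η * L i)

noncomputable def mixLoss (η : ℝ) (L : ι → ℝ) : ℝ :=
  -log ((∑ j, exp (-η * L j)) / Fintype.card ι) / η

variable [Nonempty ι]

lemma hedgeWeights_nonneg (η : ℝ) (L : ι → ℝ) (j : ι) : 0 ≤ hedgeWeights η L j := by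
  unfold hedgeWeights; positivity

lemma sum_hedgeWeights (η : ℝ) (L : ι → ℝ) : ∑ j, hedgeWeights η L j = 1 := by
  simp only [hedgeWeights, ← sum_div]
  exact div_self (by positivity)

@[simp]
lemma mixLoss_zero (η : ℝ) : mixLoss η (0 : ι → ℝ) = 0 := by
  simp [mixLoss]

lemma mixLoss_le {η : ℝ} (hη : 0 < η) (L : ι → ℝ) (k : ι) :
    mixLoss η L ≤ L k + log (Fintype.card ι) / η := by
  have hsingle : exp (-η * L k) ≤ ∑ j, exp (-η * L j) :=
    single_le_sum (f := fun j => exp (-η * L j)) (fun j _ => (exp_pos _).le) (mem_univ k)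
  have hlog : -η * L k - log (Fintype.card ι) ≤ log ((∑ j, exp (-η * L j)) / Fintype.card ι) := by
    rw [← log_exp (-η * L k), ← log_div (exp_pos _).ne' (by positivity)]
    gcongr
  rw [mixLoss, div_le_iff₀ hη, add_mul, div_mul_cancel₀ _ hη.ne']
  linarith

lemma mixLoss_le_mixLoss {η η' : ℝ} (hη : 0 < η) (h : η ≤ η') (L : ι → ℝ) :
    mixLoss η' L ≤ mixLoss η L := by
  have hη' : 0 < η' := hη.trans_le h
  -- Jensen for `x ↦ x ^ (η' / η)` applied to the uniform average of `exp (-η * L j)`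
  have hjensen := rpow_arith_mean_le_arith_mean_rpow univ (fun _ => (Fintype.card ι : ℝ)⁻¹)
    (fun j => exp (-η * L j)) (fun _ _ => by positivity) (by simp)
    (fun _ _ => (exp_pos _).le) ((one_le_div hη).mpr h)
  have hexp : ∀ i, -η * L i * (η' / η) = -η' * L i := fun i => by field_simp
  simp only [← mul_sum, ← exp_mul, hexp] at hjensen
  rw [inv_mul_eq_div, inv_mul_eq_div] at hjensen
  have hlog := log_le_log (by positivity) hjensen
  rw [log_rpow (by positivity), div_mul_eq_mul_div, div_le_iff₀ hη] at hlog
  rw [mixLoss, mixLoss, neg_div, neg_div, neg_le_neg_iff, div_le_div_iff₀ hη hη']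
  linarith

lemma sum_mul_hedgeWeights_le {η c : ℝ} (hη : 0 < η) (L ℓ : ι → ℝ) (hℓ : ∀ j, |ℓ j| ≤ c) :
    ∑ j, ℓ j * hedgeWeights η L j ≤ mixLoss η (L + ℓ) - mixLoss η L + η * c ^ 2 / 2 := by
  set S := ∑ j, exp (-η * L j)
  set S' := ∑ j, exp (-η * (L + ℓ) j)
  have hS : 0 < S := by positivity
  have hS' : 0 < S' := by positivity
  have hratio : ∑ j, hedgeWeights η L j * exp (-η * ℓ j) = S' / S := by
    simp only [hedgeWeights, S', sum_div, Pi.add_apply, mul_add, exp_add]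
    exact sum_congr rfl fun j _ => div_mul_eq_mul_div _ _ _
  have hhoeffding := sum_mul_exp_le_of_abs_le (hedgeWeights_nonneg η L) (sum_hedgeWeights η L)
    hℓ (-η)
  rw [hratio, ← log_le_iff_le_exp (by positivity), log_div hS'.ne' hS.ne'] at hhoeffding
  have hcard : (Fintype.card ι : ℝ) ≠ 0 := by positivity
  rw [mixLoss, mixLoss, log_div hS'.ne' hcard, log_div hS.ne' hcard]
  simp only [neg_sq, mul_comm (hedgeWeights η L _)] at hhoeffding
  field_simp
  linarith

lemma sum_hedge_loss_le_mixLoss {η : ℕ → ℝ} (hη : ∀ t, 0 < η t) (hanti : Antitone η)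
    {ℓ : ℕ → ι → ℝ} {c : ℕ → ℝ} (M : ℕ) (hℓ : ∀ t < M, ∀ j, |ℓ t j| ≤ c t) :
    ∑ t ∈ range M, ∑ j, ℓ t j * hedgeWeights (η t) (cumLoss ℓ t) j
      ≤ mixLoss (η (M - 1)) (cumLoss ℓ M) + ∑ t ∈ range M, η t * c t ^ 2 / 2 := by
  induction M with
  | zero => simp
  | succ M ih =>
    have hround := sum_mul_hedgeWeights_le (hη M) (cumLoss ℓ M) (ℓ M) (hℓ M M.lt_succ_self)
    have hrate := mixLoss_le_mixLoss (hη M) (hanti (M.sub_le 1)) (cumLoss ℓ M)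
    have hprev := ih fun t ht => hℓ t (ht.trans M.lt_succ_self)
    rw [sum_range_succ, sum_range_succ, Nat.add_sub_cancel, cumLoss_succ]
    linarith

theorem hedge_regret_le {η : ℕ → ℝ} (hη : ∀ t, 0 < η t) (hanti : Antitone η)
    {ℓ : ℕ → ι → ℝ} {c : ℕ → ℝ} (M : ℕ) (hℓ : ∀ t < M, ∀ j, |ℓ t j| ≤ c t) (k : ι) :
    ∑ t ∈ range M, ∑ j, ℓ t j * hedgeWeights (η t) (cumLoss ℓ t) j - cumLoss ℓ M k
      ≤ log (Fintype.card ι) / η (M - 1) + ∑ t ∈ range M, η t * c t ^ 2 / 2 := by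
  have := sum_hedge_loss_le_mixLoss hη hanti M hℓ
  have := mixLoss_le (hη (M - 1)) (cumLoss ℓ M) k
  linarith

end Hedge

lemma one_div_sqrt_add_one_le (x : ℝ) (hx : 0 ≤ x) : 1 / √(x + 1) ≤ 2 * (√(x + 1) - √x) := by
  have hx1 : 0 < √(x + 1) := sqrt_pos.mpr (by linarith)
  rw [div_le_iff₀ hx1]
  nlinarith [sq_nonneg (√x - √(x + 1)), sq_sqrt hx, sq_sqrt (by linarith : 0 ≤ x + 1)]

lemma sum_range_one_div_sqrt_succ_le (M : ℕ) : ∑ n ∈ range M, 1 / √((n : ℝ) + 1) ≤ 2 * √M := by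
  calc ∑ n ∈ range M, 1 / √((n : ℝ) + 1)
      ≤ ∑ n ∈ range M, 2 * (√(((n + 1 : ℕ) : ℝ)) - √(n : ℝ)) :=
        sum_le_sum fun n _ => by push_cast; exact one_div_sqrt_add_one_le n n.cast_nonneg
    _ = 2 * √M := by rw [← mul_sum, sum_range_sub (fun n : ℕ => √(n : ℝ))]; simp

theorem Fin.sum_filter_lt_eq_sum_range {M : ℕ} {α : Type*} [AddCommMonoid α] (f : Fin M → α)
    (t : Fin M) :
    ∑ s ∈ univ.filter (· < t), f s = ∑ n ∈ range t, if h : n < M then f ⟨n, h⟩ else 0 := by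
  rw [← Nat.Iio_eq_range, ← Fin.map_valEmbedding_Iio, sum_map, filter_gt_eq_Iio]
  exact sum_congr rfl fun s _ => by simp

theorem hedge_regret_le_sqrt {ι : Type*} [Fintype ι] (hcard : 1 < Fintype.card ι) {β : ℝ}
    (hβ : 0 < β) {ℓ : ℕ → ι → ℝ} (M : ℕ) (hℓ : ∀ t < M, ∀ j, |ℓ t j| ≤ β) (k : ι) :
    ∑ t ∈ range M, ∑ j, ℓ t j *
        hedgeWeights (√(log (Fintype.card ι)) / (β * √((t : ℝ) + 1))) (cumLoss ℓ t) j
      - cumLoss ℓ M k ≤ 2 * β * √(M * log (Fintype.card ι)) := by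
  rcases M.eq_zero_or_pos with rfl | hM
  · simp
  have : Nonempty ι := Fintype.card_pos_iff.mp (by omega)
  set n : ℝ := (Fintype.card ι : ℝ)
  have hlog : 0 < log n := log_pos (Nat.one_lt_cast.mpr hcard)
  set η : ℕ → ℝ := fun t => √(log n) / (β * √((t : ℝ) + 1))
  have hη : ∀ t, 0 < η t := fun t => by positivity
  have hanti : Antitone η := fun s t hst => by
    simp only [η]
    gcongr
  have hlast : log n / η (M - 1) = β * √M * √(log n) := by
    simp only [η, Nat.cast_pred hM, sub_add_cancel]
    rw [div_div_eq_mul_div, mul_comm, mul_div_assoc, div_sqrt]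
  have hrates : ∑ t ∈ range M, η t * β ^ 2 / 2 ≤ β * √M * √(log n) := by
    calc ∑ t ∈ range M, η t * β ^ 2 / 2
        = β * √(log n) / 2 * ∑ t ∈ range M, 1 / √((t : ℝ) + 1) := by
          rw [mul_sum]
          refine sum_congr rfl fun t _ => ?_
          simp only [η]
          field_simp
      _ ≤ β * √(log n) / 2 * (2 * √M) := by gcongr; exact sum_range_one_div_sqrt_succ_le M
      _ = β * √M * √(log n) := by ring
  have hregret := hedge_regret_le hη hanti M hℓ k
  rw [sqrt_mul M.cast_nonneg]
  linarith

/-- Regret bound for exponential weights (Hedge) on `K ≥ 2` experts over `M` rounds,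
with time-varying learning rate `√(ln K)/(β √t)` (round `t` is `(t : Fin M) + 1`):
for every expert `k`, the regret is at most `2 β √(M ln K)`. -/
theorem stmt_3 (K M : ℕ) (hK : 2 ≤ K)
    (ℓ : Fin M → Fin K → ℝ) (c : Fin M → ℝ) (β : ℝ) (hβ : 0 < β)
    (hc : ∀ t k, |ℓ t k| ≤ c t) (hcβ : ∀ t, c t ≤ β)
    (p : Fin M → Fin K → ℝ)
    (hp : ∀ t k, p t k =
      Real.exp (-(Real.sqrt (Real.log K) / (β * Real.sqrt ((t : ℕ) + 1))) *
          ∑ s ∈ Finset.univ.filter (fun s : Fin M => s < t), ℓ s k) /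
        ∑ k' : Fin K,
          Real.exp (-(Real.sqrt (Real.log K) / (β * Real.sqrt ((t : ℕ) + 1))) *
            ∑ s ∈ Finset.univ.filter (fun s : Fin M => s < t), ℓ s k')) :
    ∀ k : Fin K,
      ∑ t : Fin M, (∑ k' : Fin K, ℓ t k' * p t k') - ∑ t : Fin M, ℓ t k
        ≤ 2 * β * Real.sqrt (M * Real.log K) := by
  intro k
  set ℓ' : ℕ → Fin K → ℝ := fun n j => if h : n < M then ℓ ⟨n, h⟩ j else 0
  have hℓ' : ∀ t < M, ∀ j, |ℓ' t j| ≤ β := fun t ht j => by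
    simpa [ℓ', ht] using (hc _ j).trans (hcβ _)
  have hweights : ∀ (t : Fin M) j, p t j = hedgeWeights
      (√(log (Fintype.card (Fin K))) / (β * √((t : ℕ) + 1))) (cumLoss ℓ' t) j := by
    intro t j
    simp only [hp, Fin.sum_filter_lt_eq_sum_range, hedgeWeights, cumLoss, Finset.sum_apply, ℓ',
      Fintype.card_fin]
  have hlosses : ∑ t : Fin M, ∑ k', ℓ t k' * p t k' = ∑ t ∈ range M, ∑ j, ℓ' t j *
      hedgeWeights (√(log (Fintype.card (Fin K))) / (β * √((t : ℝ) + 1))) (cumLoss ℓ' t) j := by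
    rw [← Fin.sum_univ_eq_sum_range]
    simp [ℓ', hweights]
  have hexpert : ∑ t : Fin M, ℓ t k = cumLoss ℓ' M k := by
    simp [cumLoss, Finset.sum_apply, ℓ', Finset.sum_fin_eq_sum_range]
  have hregret := hedge_regret_le_sqrt (by rw [Fintype.card_fin]; omega) hβ M hℓ' k
  rw [hlosses, hexpert]
  simpa using hregret
end

section
/- Let G be an undirected graph on {1,…,N} with closed neighborhoods 𝒩_j of sizes N_j, N_min = min_j N_j, N_max = max_j N_j. Let T_1,…,T_N ≥ 0 with T = Σ_i T_i, and let σ_1²,…,σ_N² ≥ 0 with average σ̄² = (1/N) Σ_j σ_j². Then Σ_{j=1}^N ( √(1 + σ_j²(N_j − 1)) / min_{i ∈ 𝒩_j} N_i ) √( Σ_{i ∈ 𝒩_j} T_i ) ≤ (N / N_min) √(1 + σ̄²(N_max − 1)) √T. -/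
/-! Each summand only grows when `N_j` is replaced by `N_max`, the minimum over `𝒩_j` by the
global minimum `N_min`, and the partial sum of the `T_i` by `T`. What remains is
`Σ_j √(1 + σ_j²(N_max − 1))`, which by Cauchy–Schwarz (concavity of `√`) is at most
`N` times the square root of the mean `1 + σ̄²(N_max − 1)`. -/

open Finset

theorem Real.sum_sqrt_le_card_mul_sqrt_mean {ι : Type*} [Fintype ι] {f : ι → ℝ}
    (hf : ∀ i, 0 ≤ f i) :
    ∑ i, √(f i) ≤ Fintype.card ι * √((∑ i, f i) / Fintype.card ι) := by
  have hcs := Real.sum_sqrt_mul_sqrt_le univ (fun _ ↦ zero_le_one) hf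
  simp only [Real.sqrt_one, one_mul, sum_const, card_univ, nsmul_eq_mul, mul_one] at hcs
  rcases (Nat.cast_nonneg (Fintype.card ι) : (0 : ℝ) ≤ _).eq_or_lt with hc | hc
  · simpa [← hc] using hcs
  · calc ∑ i, √(f i) ≤ √(Fintype.card ι) * √(∑ i, f i) := hcs
      _ = Fintype.card ι * √((∑ i, f i) / Fintype.card ι) := by
        rw [Real.sqrt_div' _ hc.le]
        field_simp
        rw [Real.sq_sqrt hc.le, mul_comm]

theorem stmt_7_general (N : ℕ) (hN : 0 < N)
    (𝒩 : Fin N → Finset (Fin N))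
    (hself : ∀ i, i ∈ 𝒩 i)
    (Tv : Fin N → ℝ) (hTv : ∀ i, 0 ≤ Tv i)
    (σ2 : Fin N → ℝ) (hσ2 : ∀ j, 0 ≤ σ2 j) :
    ∑ j : Fin N,
        (Real.sqrt (1 + σ2 j * (((𝒩 j).card : ℝ) - 1))
            / ((𝒩 j).inf' ⟨j, hself j⟩ fun i => ((𝒩 i).card : ℝ)))
          * Real.sqrt (∑ i ∈ 𝒩 j, Tv i)
      ≤ ((N : ℝ)
          / (Finset.univ.inf' ⟨⟨0, hN⟩, Finset.mem_univ _⟩ fun i : Fin N => ((𝒩 i).card : ℝ)))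
        * Real.sqrt (1 +
            ((1 / (N : ℝ)) * ∑ j : Fin N, σ2 j) *
            ((Finset.univ.sup' ⟨⟨0, hN⟩, Finset.mem_univ _⟩ fun i : Fin N => ((𝒩 i).card : ℝ)) - 1))
        * Real.sqrt (∑ i : Fin N, Tv i) := by
  set deg : Fin N → ℝ := fun i ↦ ((𝒩 i).card : ℝ)
  set Nmin := univ.inf' ⟨⟨0, hN⟩, mem_univ _⟩ deg
  set Nmax := univ.sup' ⟨⟨0, hN⟩, mem_univ _⟩ deg
  have hNmin_pos : 0 < Nmin :=
    (lt_inf'_iff _).2 fun i _ ↦ Nat.cast_pos.2 (card_pos.2 ⟨i, hself i⟩)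
  have hvar_nonneg : ∀ j, 0 ≤ 1 + σ2 j * (Nmax - 1) := fun j ↦ by
    have : 1 ≤ deg j := Nat.one_le_cast.2 (card_pos.2 ⟨j, hself j⟩)
    nlinarith [hσ2 j, le_sup' deg (mem_univ j)]
  have hterm : ∀ j,
      √(1 + σ2 j * (deg j - 1)) / (𝒩 j).inf' ⟨j, hself j⟩ deg * √(∑ i ∈ 𝒩 j, Tv i) ≤
        √(1 + σ2 j * (Nmax - 1)) / Nmin * √(∑ i, Tv i) := fun j ↦ by
    gcongr
    · exact hσ2 j
    · exact le_sup' deg (mem_univ j)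
    · exact inf'_mono deg (subset_univ _) _
    · exact fun i _ _ ↦ hTv i
    · exact subset_univ _
  calc _ ≤ ∑ j, √(1 + σ2 j * (Nmax - 1)) / Nmin * √(∑ i, Tv i) :=
        sum_le_sum fun j _ ↦ hterm j
    _ = (∑ j, √(1 + σ2 j * (Nmax - 1))) / Nmin * √(∑ i, Tv i) := by
      rw [← sum_mul, ← sum_div]
    _ ≤ N * √((∑ j, (1 + σ2 j * (Nmax - 1))) / N) / Nmin * √(∑ i, Tv i) := by
      gcongr
      simpa only [Fintype.card_fin] using Real.sum_sqrt_le_card_mul_sqrt_mean hvar_nonneg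
    _ = _ := by
      have hmean :
          (∑ j, (1 + σ2 j * (Nmax - 1))) / N = 1 + (1 / N * ∑ j, σ2 j) * (Nmax - 1) := by
        rw [sum_add_distrib, ← sum_mul, sum_const, card_univ, Fintype.card_fin, nsmul_one]
        field_simp
      rw [hmean]
      ring

/-- Second part of the uniform-weights bound in Theorem 2 (average local variance):
`Σ_j (√(1+σ_j²(N_j−1)) / min_{i∈𝒩_j} N_i) √(Σ_{i∈𝒩_j} T_i)
  ≤ (N/N_min) √(1+σ̄²(N_max−1)) √T`. -/
theorem stmt_7 (N : ℕ) (hN : 0 < N)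
    (𝒩 : Fin N → Finset (Fin N))
    (hself : ∀ i, i ∈ 𝒩 i)
    (hsym : ∀ i j : Fin N, j ∈ 𝒩 i ↔ i ∈ 𝒩 j)
    (Tv : Fin N → ℝ) (hTv : ∀ i, 0 ≤ Tv i)
    (σ2 : Fin N → ℝ) (hσ2 : ∀ j, 0 ≤ σ2 j) :
    ∑ j : Fin N,
        (Real.sqrt (1 + σ2 j * (((𝒩 j).card : ℝ) - 1))
            / ((𝒩 j).inf' ⟨j, hself j⟩ fun i => ((𝒩 i).card : ℝ)))
          * Real.sqrt (∑ i ∈ 𝒩 j, Tv i)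
      ≤ ((N : ℝ)
          / (Finset.univ.inf' ⟨⟨0, hN⟩, Finset.mem_univ _⟩ fun i : Fin N => ((𝒩 i).card : ℝ)))
        * Real.sqrt (1 +
            ((1 / (N : ℝ)) * ∑ j : Fin N, σ2 j) *
            ((Finset.univ.sup' ⟨⟨0, hN⟩, Finset.mem_univ _⟩ fun i : Fin N => ((𝒩 i).card : ℝ)) - 1))
        * Real.sqrt (∑ i : Fin N, Tv i) :=
  stmt_7_general N hN 𝒩 hself Tv hTv σ2 hσ2
end

section
/- Let G be an undirected graph on {1,…,N} with closed neighborhoods 𝒩_i, and let q_1,…,q_N ≥ 0 with Σ_{i=1}^N q_i = 1 and Q_i := Σ_{j ∈ 𝒩_i} q_j > 0 for all i. Then Σ_{j=1}^N q_j √( Σ_{i ∈ 𝒩_j} q_i / Q_i² ) ≤ √( Σ_{i=1}^N q_i / Q_i ). -/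
/-! Since `j ∈ 𝒩 i ↔ i ∈ 𝒩 j`, swapping the order of summation gives
`Σ_j q_j Σ_{i ∈ 𝒩_j} q_i / Q_i² = Σ_i (q_i / Q_i²) Q_i = Σ_i q_i / Q_i`, and Jensen's inequality
for the concave square root with the probability weights `q_j` bounds the left-hand side of the
theorem by the square root of this quantity. -/

open Finset

theorem sum_mul_sum_of_mem_comm {ι R : Type*} [Fintype ι] [NonUnitalNonAssocCommSemiring R]
    (𝒩 : ι → Finset ι) (hsym : ∀ i j, j ∈ 𝒩 i ↔ i ∈ 𝒩 j) (a f : ι → R) :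
    ∑ j, a j * ∑ i ∈ 𝒩 j, f i = ∑ i, f i * ∑ j ∈ 𝒩 i, a j := by
  simp only [mul_sum]
  rw [sum_comm' (t' := univ) (s' := 𝒩) fun j i => by simp [hsym j i]]
  exact sum_congr rfl fun i _ => sum_congr rfl fun j _ => mul_comm _ _

theorem div_sq_mul_self {K : Type*} [DivisionRing K] (a b : K) : b / a ^ 2 * a = b / a := by
  rcases eq_or_ne a 0 with rfl | ha
  · simp
  · rw [div_eq_mul_inv, div_eq_mul_inv, sq, mul_inv_rev, ← mul_assoc, mul_assoc _ _ a,
      inv_mul_cancel₀ ha, mul_one]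

theorem stmt_10_general (N : ℕ)
    (𝒩 : Fin N → Finset (Fin N))
    (hsym : ∀ i j : Fin N, j ∈ 𝒩 i ↔ i ∈ 𝒩 j)
    (q : Fin N → ℝ) (hq0 : ∀ i, 0 ≤ q i) (hq1 : ∑ i : Fin N, q i = 1) :
    ∑ j : Fin N, q j * Real.sqrt (∑ i ∈ 𝒩 j, q i / (∑ j' ∈ 𝒩 i, q j') ^ 2)
      ≤ Real.sqrt (∑ i : Fin N, q i / (∑ j ∈ 𝒩 i, q j)) := by
  have hswap : ∑ j, q j * ∑ i ∈ 𝒩 j, q i / (∑ j' ∈ 𝒩 i, q j') ^ 2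
      = ∑ i, q i / ∑ j ∈ 𝒩 i, q j := by
    rw [sum_mul_sum_of_mem_comm 𝒩 hsym]
    exact sum_congr rfl fun i _ => div_sq_mul_self _ _
  rw [← hswap]
  exact Real.strictConcaveOn_sqrt.concaveOn.le_map_sum (fun i _ => hq0 i) hq1
    fun j _ => Set.mem_Ici.2 <| sum_nonneg fun i _ => div_nonneg (hq0 i) (sq_nonneg _)

/-- Jensen plus index-swap step of Theorem 3 (second claim):
`Σ_j q_j √(Σ_{i∈𝒩_j} q_i/Q_i²) ≤ √(Σ_i q_i/Q_i)`. -/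
theorem stmt_10 (N : ℕ)
    (𝒩 : Fin N → Finset (Fin N))
    (hself : ∀ i, i ∈ 𝒩 i)
    (hsym : ∀ i j : Fin N, j ∈ 𝒩 i ↔ i ∈ 𝒩 j)
    (q : Fin N → ℝ) (hq0 : ∀ i, 0 ≤ q i) (hq1 : ∑ i : Fin N, q i = 1)
    (hQ : ∀ i : Fin N, 0 < ∑ j ∈ 𝒩 i, q j) :
    ∑ j : Fin N, q j * Real.sqrt (∑ i ∈ 𝒩 j, q i / (∑ j' ∈ 𝒩 i, q j') ^ 2)
      ≤ Real.sqrt (∑ i : Fin N, q i / (∑ j ∈ 𝒩 i, q j)) :=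
  stmt_10_general N 𝒩 hsym q hq0 hq1
end

section
/- Let G be a simple undirected graph on {1,…,N} and let q_1,…,q_N ≥ 0 with Σ_{i=1}^N q_i = 1 and Q_i := q_i + Σ_{j adjacent to i} q_j > 0 for all i. Then Σ_{i=1}^N q_i / Q_i ≤ α(G), where α(G) is the independence number of G, i.e. the largest cardinality of a set of pairwise non-adjacent vertices. -/
/-!
Greedy argument: let `v` be a vertex whose closed neighbourhood has the least mass. Every vertex
`i` of that neighbourhood has `Q_i ≥ Q_v`, so together they contribute at most
`Σ_{i ∈ N[v]} q_i / Q_v = 1`. Deleting `N[v]` only shrinks the remaining neighbourhood masses,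
and an independent set of the remaining graph extends by `v`, so induction on the independence
bound gives the rest. Masses are taken inside the current vertex set, which is why the
statement is proved for an arbitrary finite vertex set `s`.
-/

open Finset

section OrderedField

variable {K : Type*} [Field K] [LinearOrder K] [IsStrictOrderedRing K]

lemma div_le_div_of_nonneg_of_le_of_le {a b c : K} (ha : 0 ≤ a) (hab : a ≤ b) (hbc : b ≤ c) :
    a / c ≤ a / b := by
  rcases (ha.trans hab).eq_or_lt with hb | hb
  · simp [le_antisymm (hb ▸ hab) ha]
  · exact div_le_div_of_nonneg_left ha hb hbc

lemma sum_div_le_one_of_sum_le {ι : Type*} {t : Finset ι} {q d : ι → K} (hq : ∀ i, 0 ≤ q i)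
    (hd : ∀ i ∈ t, ∑ j ∈ t, q j ≤ d i) : ∑ i ∈ t, q i / d i ≤ 1 :=
  calc ∑ i ∈ t, q i / d i
      ≤ ∑ i ∈ t, q i / ∑ j ∈ t, q j := sum_le_sum fun i hi ↦
        div_le_div_of_nonneg_of_le_of_le (hq i) (single_le_sum (fun j _ ↦ hq j) hi) (hd i hi)
    _ = (∑ j ∈ t, q j) / ∑ j ∈ t, q j := (sum_div ..).symm
    _ ≤ 1 := div_self_le_one _

end OrderedField

namespace SimpleGraph

variable {V : Type*} [DecidableEq V] (G : SimpleGraph V) [DecidableRel G.Adj]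

def closedNbhdMass (q : V → ℝ) (s : Finset V) (i : V) : ℝ :=
  ∑ j ∈ s with (j = i ∨ G.Adj i j), q j

variable {G} {q : V → ℝ}

lemma le_closedNbhdMass (hq : ∀ i, 0 ≤ q i) {s : Finset V} {i : V} (hi : i ∈ s) :
    q i ≤ G.closedNbhdMass q s i :=
  single_le_sum (fun j _ ↦ hq j) (mem_filter.2 ⟨hi, .inl rfl⟩)

lemma closedNbhdMass_mono (hq : ∀ i, 0 ≤ q i) {s t : Finset V} (hst : s ⊆ t) (i : V) :
    G.closedNbhdMass q s i ≤ G.closedNbhdMass q t i :=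
  sum_le_sum_of_subset_of_nonneg (filter_subset_filter _ hst) fun j _ _ ↦ hq j

lemma sum_div_closedNbhdMass_le_of_subset (hq : ∀ i, 0 ≤ q i) {s t : Finset V} (hst : s ⊆ t) :
    ∑ i ∈ s, q i / G.closedNbhdMass q t i ≤ ∑ i ∈ s, q i / G.closedNbhdMass q s i :=
  sum_le_sum fun i hi ↦ div_le_div_of_nonneg_of_le_of_le (hq i) (le_closedNbhdMass hq hi)
    (closedNbhdMass_mono hq hst i)

lemma isIndepSet_insert_of_subset_compl_closedNbhd {s t : Finset V} {v : V}
    (hts : t ⊆ s.filter fun j ↦ ¬(j = v ∨ G.Adj v j)) (ht : G.IsIndepSet (t : Set V)) :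
    G.IsIndepSet (insert v t : Set V) := by
  refine Set.pairwise_insert.2 ⟨ht, fun j hj _ ↦ ?_⟩
  have hvj : ¬G.Adj v j := fun hvj ↦ (mem_filter.1 (hts hj)).2 (.inr hvj)
  exact ⟨hvj, fun hjv ↦ hvj hjv.symm⟩

theorem sum_div_closedNbhdMass_le (hq : ∀ i, 0 ≤ q i) {n : ℕ} {s : Finset V}
    (hs : ∀ t ⊆ s, G.IsIndepSet (t : Set V) → #t ≤ n) :
    ∑ i ∈ s, q i / G.closedNbhdMass q s i ≤ n := by
  induction n generalizing s with
  | zero =>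
    obtain rfl | ⟨v, hv⟩ := s.eq_empty_or_nonempty
    · simp
    · simpa using hs {v} (by simpa) (by simp)
  | succ n ih =>
    obtain rfl | hne := s.eq_empty_or_nonempty
    · simp only [sum_empty]
      positivity
    obtain ⟨v, hvs, hvmin⟩ := s.exists_min_image (G.closedNbhdMass q s) hne
    set s' := s.filter fun j ↦ ¬(j = v ∨ G.Adj v j)
    have hnbhd : ∑ i ∈ s with (i = v ∨ G.Adj v i), q i / G.closedNbhdMass q s i ≤ 1 :=
      sum_div_le_one_of_sum_le hq fun i hi ↦ hvmin i (mem_filter.1 hi).1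
    have hs' : ∀ t ⊆ s', G.IsIndepSet (t : Set V) → #t ≤ n := by
      intro t hts ht
      have hvt : v ∉ t := fun hv ↦ (mem_filter.1 (hts hv)).2 (.inl rfl)
      have := hs (insert v t) (insert_subset hvs (hts.trans (filter_subset _ _)))
        (by simpa using isIndepSet_insert_of_subset_compl_closedNbhd hts ht)
      rwa [card_insert_of_notMem hvt, Nat.add_le_add_iff_right] at this
    have hrest : ∑ i ∈ s', q i / G.closedNbhdMass q s i ≤ n :=
      (sum_div_closedNbhdMass_le_of_subset hq (filter_subset _ _)).trans (ih hs')
    rw [← sum_filter_add_sum_filter_not s (fun j ↦ j = v ∨ G.Adj v j)]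
    push_cast
    linarith

lemma closedNbhdMass_univ [Fintype V] (i : V) :
    G.closedNbhdMass q univ i = q i + ∑ j ∈ G.neighborFinset i, q j := by
  have : univ.filter (fun j ↦ j = i ∨ G.Adj i j) = insert i (G.neighborFinset i) := by
    ext j; simp
  rw [closedNbhdMass, this, sum_insert (by simp)]

end SimpleGraph

theorem stmt_11_general (N : ℕ) (G : SimpleGraph (Fin N)) [DecidableRel G.Adj]
    (q : Fin N → ℝ) (hq0 : ∀ i, 0 ≤ q i)
    (Q : Fin N → ℝ) (hQ : ∀ i, Q i = q i + ∑ j ∈ G.neighborFinset i, q j)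
    (α : ℕ)
    (hα : IsGreatest
      {n : ℕ | ∃ S : Finset (Fin N),
        (∀ i ∈ S, ∀ j ∈ S, ¬ G.Adj i j) ∧ S.card = n} α) :
    ∑ i : Fin N, q i / Q i ≤ (α : ℝ) := by
  have hindep : ∀ t ⊆ (univ : Finset (Fin N)), G.IsIndepSet (t : Set (Fin N)) → #t ≤ α :=
    fun t _ ht ↦ hα.2 ⟨t, fun i hi j hj hij ↦ ht hi hj (G.ne_of_adj hij) hij, rfl⟩
  simpa [← hQ, G.closedNbhdMass_univ] using G.sum_div_closedNbhdMass_le hq0 hindep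

/-- `Σ_i q_i / Q_i ≤ α(G)` where `Q_i` is the probability mass of the closed neighborhood
of `i` and `α(G)` is the independence number of the simple graph `G`. -/
theorem stmt_11 (N : ℕ) (G : SimpleGraph (Fin N)) [DecidableRel G.Adj]
    (q : Fin N → ℝ) (hq0 : ∀ i, 0 ≤ q i) (hq1 : ∑ i : Fin N, q i = 1)
    (Q : Fin N → ℝ) (hQ : ∀ i, Q i = q i + ∑ j ∈ G.neighborFinset i, q j)
    (hQpos : ∀ i, 0 < Q i)
    (α : ℕ)
    (hα : IsGreatest
      {n : ℕ | ∃ S : Finset (Fin N),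
        (∀ i ∈ S, ∀ j ∈ S, ¬ G.Adj i j) ∧ S.card = n} α) :
    ∑ i : Fin N, q i / Q i ≤ (α : ℝ) :=
  stmt_11_general N G q hq0 Q hQ α hα
end

section
/- Let i_1,…,i_T be independent random variables with values in {1,…,N} and ℙ(i_t = i) = q_i for all t. Fix a vertex j of an undirected graph G on {1,…,N} with closed neighborhood 𝒩_j, assume Q_j := Σ_{i ∈ 𝒩_j} q_i > 0, and let w_{ij} ≥ 0 for i ∈ 𝒩_j. Setting n_t = Σ_{s ≤ t} 1{i_s ∈ 𝒩_j}, one has 𝔼[ Σ_{t=1}^T w_{i_t j}² · 1{i_t ∈ 𝒩_j} / √(1 + n_{t−1}) ] ≤ 2 ( Σ_{i ∈ 𝒩_j} (q_i/Q_j) w_{ij}² ) · 𝔼[ √(n_T) ]. -/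
open MeasureTheory

private lemma sqrt_step16 (n : ℝ) (hn : 0 ≤ n) :
    2 * Real.sqrt n + 1 / Real.sqrt (1 + n) ≤ 2 * Real.sqrt (n + 1) := by
  have h1 : (0:ℝ) ≤ 1 + n := by linarith
  have hb : 0 < Real.sqrt (1 + n) := Real.sqrt_pos.2 (by linarith)
  have ha2 : Real.sqrt n ^ 2 = n := Real.sq_sqrt hn
  have hb2 : Real.sqrt (1 + n) ^ 2 = 1 + n := Real.sq_sqrt h1
  have hrw : Real.sqrt (n + 1) = Real.sqrt (1 + n) := by ring_nf
  rw [hrw]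
  set a := Real.sqrt n
  set b := Real.sqrt (1 + n)
  have ha : 0 ≤ a := Real.sqrt_nonneg _
  have key : 1 / b ≤ 2 * b - 2 * a := by
    rw [div_le_iff₀ hb]
    nlinarith [sq_nonneg (a - b)]
  linarith

private lemma det_sum16 (b : ℕ → Bool) (m : ℕ) :
    ∑ t ∈ Finset.range m,
      (if b t then 1 / Real.sqrt (1 + ((Finset.range t).filter (fun s => b s = true)).card) else 0)
      ≤ 2 * Real.sqrt (((Finset.range m).filter (fun s => b s = true)).card) := by
  induction m with
  | zero => simp
  | succ m ih =>
    rw [Finset.sum_range_succ]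
    have hcard : ((Finset.range (m+1)).filter (fun s => b s = true)).card
        = ((Finset.range m).filter (fun s => b s = true)).card + (if b m then 1 else 0) := by
      rw [Finset.range_add_one, Finset.filter_insert]
      by_cases h : b m = true
      · rw [if_pos h, Finset.card_insert_of_notMem (by simp), if_pos h]
      · simp [h]
    set c := ((Finset.range m).filter (fun s => b s = true)).card with hc
    by_cases h : b m = true
    · rw [if_pos h]
      rw [hcard, if_pos h]
      have := sqrt_step16 (c : ℝ) (by positivity)
      push_cast
      linarith
    · rw [if_neg h]
      rw [hcard, if_neg h]
      simpa using ih

private lemma integrable_bdd16 {Ω : Type*} [MeasurableSpace Ω] {μ : Measure Ω}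
    [IsProbabilityMeasure μ] {f : Ω → ℝ} (hf : Measurable f) (C : ℝ) (hC : ∀ ω, |f ω| ≤ C) :
    Integrable f μ :=
  (integrable_const C).mono' hf.aestronglyMeasurable
    (Filter.Eventually.of_forall fun ω => by simpa [Real.norm_eq_abs] using hC ω)

private lemma integral_comp_fin16 {Ω : Type*} [MeasurableSpace Ω] {μ : Measure Ω}
    [IsProbabilityMeasure μ] {N : ℕ} (X : Ω → Fin N) (hX : Measurable X) (F : Fin N → ℝ) :
    ∫ ω, F (X ω) ∂μ = ∑ i : Fin N, F i * (μ {ω | X ω = i}).toReal := by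
  have hmeasS : ∀ i : Fin N, MeasurableSet {ω | X ω = i} := fun i =>
    hX (measurableSet_singleton i)
  have h1 : ∀ ω, F (X ω) = ∑ i : Fin N, Set.indicator {ω' | X ω' = i} (fun _ => F i) ω := by
    intro ω
    rw [Finset.sum_congr rfl (fun i _ => Set.indicator_apply _ _ _)]
    simp only [Set.mem_setOf_eq]
    rw [Finset.sum_ite_eq Finset.univ (X ω) F]
    simp
  rw [integral_congr_ae (Filter.Eventually.of_forall h1)]
  rw [integral_finset_sum _ (fun i _ => (integrable_const (F i)).indicator (hmeasS i))]
  refine Finset.sum_congr rfl fun i _ => ?_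
  rw [integral_indicator_const _ (hmeasS i)]
  simp [mul_comm, measureReal_def]

private lemma card_filter_coe16 {α : Type*} (P : Finset α) (p : α → Prop) [DecidablePred p] :
    ((Finset.univ : Finset {x // x ∈ P}).filter (fun x => p x.val)).card
      = (P.filter p).card := by
  classical
  refine Finset.card_bij (fun x _ => x.val) ?_ ?_ ?_
  · intro a ha
    simp only [Finset.mem_filter, Finset.mem_univ, true_and] at ha
    exact Finset.mem_filter.2 ⟨a.2, ha⟩
  · intro a₁ _ a₂ _ h; exact Subtype.ext h
  · intro b hb
    simp only [Finset.mem_filter] at hb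
    exact ⟨⟨b, hb.1⟩, by simp [hb.2], rfl⟩

/-- Central probabilistic step of Theorem 3: under independent activations with law `q`,
`𝔼[ Σ_t w_{i_t j}² 1{i_t ∈ 𝒩_j} / √(1 + n_{t−1}) ] ≤ 2 (Σ_{i∈𝒩_j} (q_i/Q_j) w_{ij}²) 𝔼[√n_T]`. -/
theorem stmt_16 (N T : ℕ)
    (𝒩 : Fin N → Finset (Fin N))
    (hself : ∀ i, i ∈ 𝒩 i)
    (hsym : ∀ i j : Fin N, j ∈ 𝒩 i ↔ i ∈ 𝒩 j)
    (Ω : Type*) [MeasurableSpace Ω] (μ : Measure Ω) [IsProbabilityMeasure μ]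
    (iseq : Fin T → Ω → Fin N)
    (hmeas : ∀ t, Measurable (iseq t))
    (hindep : ProbabilityTheory.iIndepFun
      (m := fun _ : Fin T => (inferInstance : MeasurableSpace (Fin N))) iseq μ)
    (q : Fin N → ℝ) (hq0 : ∀ i, 0 ≤ q i) (hq1 : ∑ i : Fin N, q i = 1)
    (hlaw : ∀ (t : Fin T) (i : Fin N), μ {ω | iseq t ω = i} = ENNReal.ofReal (q i))
    (j : Fin N)
    (hQpos : 0 < ∑ i ∈ 𝒩 j, q i)
    (w : Fin N → ℝ) (hw0 : ∀ i, 0 ≤ w i)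
    (cnt : ℕ → Ω → ℕ)
    (hcnt : ∀ m ω, cnt m ω =
      (Finset.univ.filter fun s : Fin T => (s : ℕ) < m ∧ iseq s ω ∈ 𝒩 j).card) :
    ∫ ω, (∑ t : Fin T,
        (if iseq t ω ∈ 𝒩 j then
          (w (iseq t ω)) ^ 2 / Real.sqrt (1 + (cnt (t : ℕ) ω : ℝ))
        else 0)) ∂μ
      ≤ 2 * (∑ i ∈ 𝒩 j, (q i / ∑ i' ∈ 𝒩 j, q i') * (w i) ^ 2) *
          ∫ ω, Real.sqrt ((cnt T ω : ℝ)) ∂μ := by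
  classical
  set Q : ℝ := ∑ i ∈ 𝒩 j, q i with hQ
  set S : ℝ := ∑ i ∈ 𝒩 j, q i * w i ^ 2 with hSdef
  have hS0 : 0 ≤ S := Finset.sum_nonneg fun i _ => mul_nonneg (hq0 i) (sq_nonneg _)
  set F : Fin N → ℝ := fun i => if i ∈ 𝒩 j then w i ^ 2 else 0 with hFdef
  set A : Fin N → ℝ := fun i => if i ∈ 𝒩 j then 1 else 0 with hAdef
  set g : Fin T → Ω → ℝ := fun t ω => 1 / Real.sqrt (1 + (cnt (t : ℕ) ω : ℝ)) with hgdef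
  -- measurability of cnt
  have hmemS : ∀ s : Fin T, MeasurableSet {ω | iseq s ω ∈ 𝒩 j} := by
    intro s
    exact hmeas s ((Set.toFinite _).measurableSet)
  have hcm : ∀ m, Measurable (fun ω => (cnt m ω : ℝ)) := by
    intro m
    have h1 : Measurable (cnt m) := by
      have : cnt m = fun ω =>
          ∑ s : Fin T, (if (s : ℕ) < m ∧ iseq s ω ∈ 𝒩 j then 1 else 0) := by
        funext ω; rw [hcnt, Finset.card_filter]
      rw [this]
      refine Finset.measurable_sum _ fun s _ => Measurable.ite ?_ measurable_const measurable_const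
      by_cases h : (s : ℕ) < m
      · have : {ω | (s : ℕ) < m ∧ iseq s ω ∈ 𝒩 j} = {ω | iseq s ω ∈ 𝒩 j} := by
          ext ω; simp [h]
        rw [this]; exact hmemS s
      · have : {ω | (s : ℕ) < m ∧ iseq s ω ∈ 𝒩 j} = ∅ := by
          ext ω; simp [h]
        rw [this]; exact MeasurableSet.empty
    exact measurable_of_countable (fun n : ℕ => (n : ℝ)) |>.comp h1
  have hgm : ∀ t : Fin T, Measurable (g t) := by
    intro t
    exact measurable_const.div
      ((Real.continuous_sqrt.measurable).comp (measurable_const.add (hcm t)))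
  have hgbd : ∀ (t : Fin T) (ω : Ω), 0 ≤ g t ω ∧ g t ω ≤ 1 := by
    intro t ω
    have h1 : (1:ℝ) ≤ Real.sqrt (1 + (cnt (t : ℕ) ω : ℝ)) := by
      have h2 : Real.sqrt 1 ≤ Real.sqrt (1 + (cnt (t : ℕ) ω : ℝ)) :=
        Real.sqrt_le_sqrt (le_add_of_nonneg_right (Nat.cast_nonneg _))
      simpa using h2
    constructor
    · rw [hgdef]
      simp only
      positivity
    · rw [hgdef]
      simp only
      rw [div_le_one (by linarith)]
      linarith
  -- independence: key lemma
  have key : ∀ (t : Fin T) (FF : Fin N → ℝ),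
      ∫ ω, FF (iseq t ω) * g t ω ∂μ = (∑ i : Fin N, FF i * q i) * ∫ ω, g t ω ∂μ := by
    intro t FF
    set P : Finset (Fin T) := Finset.univ.filter (fun s => (s:ℕ) < (t:ℕ)) with hP
    have hdisj : Disjoint ({t} : Finset (Fin T)) P := by
      simp [P, Finset.disjoint_left]
    have hbase := hindep.indepFun_finset {t} P hdisj hmeas
    set φ : ({x // x ∈ ({t} : Finset (Fin T))} → Fin N) → ℝ :=
      fun u => FF (u ⟨t, Finset.mem_singleton_self t⟩) with hφdef
    set ψ : ({x // x ∈ P} → Fin N) → ℝ :=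
      fun v => 1 / Real.sqrt (1 +
        (((Finset.univ : Finset {x // x ∈ P}).filter (fun s => v s ∈ 𝒩 j)).card : ℝ)) with hψdef
    have hφ : Measurable φ := measurable_of_countable _
    have hψ : Measurable ψ := measurable_of_countable _
    have hind := hbase.comp hφ hψ
    have hleft : (φ ∘ fun ω (i : {x // x ∈ ({t} : Finset (Fin T))}) => iseq i ω)
        = fun ω => FF (iseq t ω) := rfl
    have hright : (ψ ∘ fun ω (s : {x // x ∈ P}) => iseq s ω) = g t := by
      funext ω
      simp only [Function.comp, hψdef, hgdef]
      congr 3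
      rw [hcnt]
      rw [card_filter_coe16 P (fun s => iseq s ω ∈ 𝒩 j)]
      rw [hP, Finset.filter_filter]
    rw [hleft, hright] at hind
    have h1 : ∫ ω, ((fun ω => FF (iseq t ω)) * g t) ω ∂μ
        = (∫ ω, FF (iseq t ω) ∂μ) * ∫ ω, g t ω ∂μ :=
      ProbabilityTheory.IndepFun.integral_mul_eq_mul_integral hind ((measurable_of_countable FF).comp (hmeas t)).aestronglyMeasurable
        (hgm t).aestronglyMeasurable
    have h2 : ∫ ω, FF (iseq t ω) ∂μ = ∑ i : Fin N, FF i * q i := by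
      rw [integral_comp_fin16 (iseq t) (hmeas t) FF]
      refine Finset.sum_congr rfl fun i _ => ?_
      rw [hlaw t i, ENNReal.toReal_ofReal (hq0 i)]
    rw [← h2]
    exact h1
  -- values of the sums
  have hFsum : ∑ i : Fin N, F i * q i = S := by
    rw [hSdef, Finset.sum_congr rfl (fun i (_ : i ∈ Finset.univ) =>
      show F i * q i = if i ∈ 𝒩 j then q i * w i ^ 2 else 0 by
        by_cases h : i ∈ 𝒩 j <;> simp [hFdef, h, mul_comm])]
    rw [Finset.sum_ite_mem, Finset.univ_inter]
  have hAsum : ∑ i : Fin N, A i * q i = Q := by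
    rw [hQ, Finset.sum_congr rfl (fun i (_ : i ∈ Finset.univ) =>
      show A i * q i = if i ∈ 𝒩 j then q i else 0 by
        by_cases h : i ∈ 𝒩 j <;> simp [hAdef, h])]
    rw [Finset.sum_ite_mem, Finset.univ_inter]
  -- integrability
  have habs : ∀ (FF : Fin N → ℝ) (x : Fin N), |FF x| ≤ ∑ i : Fin N, |FF i| := fun FF x =>
    Finset.single_le_sum (f := fun i => |FF i|) (fun i _ => abs_nonneg _) (Finset.mem_univ x)
  have hint : ∀ (t : Fin T) (FF : Fin N → ℝ),
      Integrable (fun ω => FF (iseq t ω) * g t ω) μ := by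
    intro t FF
    refine integrable_bdd16
      (((measurable_of_countable FF).comp (hmeas t)).mul (hgm t)) (∑ i : Fin N, |FF i|) ?_
    intro ω
    rw [abs_mul]
    calc |FF (iseq t ω)| * |g t ω| ≤ |FF (iseq t ω)| * 1 := by
          have hb := hgbd t ω
          rw [abs_of_nonneg hb.1]
          exact mul_le_mul_of_nonneg_left hb.2 (abs_nonneg _)
      _ ≤ ∑ i : Fin N, |FF i| := by rw [mul_one]; exact habs FF _
  -- pathwise rewriting of the integrand
  have hpt : ∀ ω, (∑ t : Fin T,
      (if iseq t ω ∈ 𝒩 j then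
        (w (iseq t ω)) ^ 2 / Real.sqrt (1 + (cnt (t : ℕ) ω : ℝ)) else 0))
      = ∑ t : Fin T, F (iseq t ω) * g t ω := by
    intro ω
    refine Finset.sum_congr rfl fun t _ => ?_
    by_cases h : iseq t ω ∈ 𝒩 j
    · rw [if_pos h]
      simp only [hFdef, hgdef, if_pos h]
      rw [mul_one_div]
    · rw [if_neg h]
      simp [hFdef, h]
  -- pathwise deterministic bound
  have hdet : ∀ ω, ∑ t : Fin T, A (iseq t ω) * g t ω ≤ 2 * Real.sqrt ((cnt T ω : ℝ)) := by
    intro ω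
    set b : ℕ → Bool := fun s => if h : s < T then decide (iseq ⟨s, h⟩ ω ∈ 𝒩 j) else false with hb
    have hcbn : ∀ m, m ≤ T →
        cnt m ω = ((Finset.range m).filter (fun s => b s = true)).card := by
      intro m hm
      rw [hcnt]
      refine Finset.card_bij (fun s _ => (s : ℕ)) ?_ ?_ ?_
      · intro s hs
        simp only [Finset.mem_filter, Finset.mem_univ, true_and] at hs
        refine Finset.mem_filter.2 ⟨Finset.mem_range.2 hs.1, ?_⟩
        rw [hb]
        simp only
        rw [dif_pos s.isLt]
        simpa [Fin.eta] using hs.2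
      · intro a₁ _ a₂ _ h
        exact Fin.val_injective h
      · intro x hx
        simp only [Finset.mem_filter, Finset.mem_range] at hx
        have hxT : x < T := lt_of_lt_of_le hx.1 hm
        refine ⟨⟨x, hxT⟩, ?_, rfl⟩
        have h2 := hx.2
        rw [hb] at h2
        simp only at h2
        rw [dif_pos hxT] at h2
        exact Finset.mem_filter.2 ⟨Finset.mem_univ _, ⟨hx.1, of_decide_eq_true h2⟩⟩
    have hsum : ∑ t : Fin T, A (iseq t ω) * g t ω
        = ∑ s ∈ Finset.range T, (if b s then
            1 / Real.sqrt (1 + (((Finset.range s).filter (fun u => b u = true)).card : ℝ))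
          else 0) := by
      rw [← Fin.sum_univ_eq_sum_range (fun s => if b s then
            1 / Real.sqrt (1 + (((Finset.range s).filter (fun u => b u = true)).card : ℝ))
          else 0) T]
      refine Finset.sum_congr rfl fun t _ => ?_
      have hbt : b (t : ℕ) = decide (iseq t ω ∈ 𝒩 j) := by
        rw [hb]
        simp only
        rw [dif_pos t.isLt]
      by_cases h : iseq t ω ∈ 𝒩 j
      · rw [hbt, if_pos (by simpa using h)]
        simp only [hAdef, hgdef, if_pos h, one_mul]
        rw [← hcbn (t : ℕ) (le_of_lt t.isLt)]
      · rw [hbt, if_neg (by simpa using h)]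
        simp [hAdef, h]
    rw [hsum, hcbn T le_rfl]
    exact det_sum16 b T
  -- integrability of the bounding function
  have hsqrtm : Measurable fun ω => Real.sqrt ((cnt T ω : ℝ)) :=
    Real.continuous_sqrt.measurable.comp (hcm T)
  have hcntle : ∀ ω, (cnt T ω : ℝ) ≤ (T : ℝ) := by
    intro ω
    have : cnt T ω ≤ T := by
      rw [hcnt]
      calc (Finset.univ.filter fun s : Fin T => (s : ℕ) < T ∧ iseq s ω ∈ 𝒩 j).card
          ≤ (Finset.univ : Finset (Fin T)).card := Finset.card_filter_le _ _
        _ = T := by simp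
    exact_mod_cast this
  have hintsqrt : Integrable (fun ω => 2 * Real.sqrt ((cnt T ω : ℝ))) μ := by
    refine integrable_bdd16 (measurable_const.mul hsqrtm) (2 * Real.sqrt T) ?_
    intro ω
    rw [abs_of_nonneg (by positivity)]
    have := Real.sqrt_le_sqrt (hcntle ω)
    linarith
  have hintsum : Integrable (fun ω => ∑ t : Fin T, A (iseq t ω) * g t ω) μ :=
    integrable_finset_sum _ (fun t _ => hint t A)
  -- put everything together
  rw [integral_congr_ae (Filter.Eventually.of_forall hpt)]
  rw [integral_finset_sum _ (fun t _ => hint t F)]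
  have hterm : ∀ t : Fin T, ∫ ω, F (iseq t ω) * g t ω ∂μ
      = (S / Q) * ∫ ω, A (iseq t ω) * g t ω ∂μ := by
    intro t
    rw [key t F, key t A, hFsum, hAsum, ← mul_assoc, div_mul_cancel₀ _ (ne_of_gt hQpos)]
  rw [Finset.sum_congr rfl (fun t _ => hterm t), ← Finset.mul_sum]
  rw [← integral_finset_sum _ (fun t _ => hint t A)]
  have hfinal : ∫ ω, ∑ t : Fin T, A (iseq t ω) * g t ω ∂μ
      ≤ 2 * ∫ ω, Real.sqrt ((cnt T ω : ℝ)) ∂μ := by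
    calc ∫ ω, ∑ t : Fin T, A (iseq t ω) * g t ω ∂μ
        ≤ ∫ ω, 2 * Real.sqrt ((cnt T ω : ℝ)) ∂μ :=
          integral_mono hintsum hintsqrt hdet
      _ = 2 * ∫ ω, Real.sqrt ((cnt T ω : ℝ)) ∂μ := MeasureTheory.integral_const_mul 2 _
  have hcoef : (∑ i ∈ 𝒩 j, (q i / Q) * w i ^ 2) = S / Q := by
    rw [hSdef, Finset.sum_div]
    exact Finset.sum_congr rfl fun i _ => by ring
  calc (S / Q) * ∫ ω, ∑ t : Fin T, A (iseq t ω) * g t ω ∂μ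
      ≤ (S / Q) * (2 * ∫ ω, Real.sqrt ((cnt T ω : ℝ)) ∂μ) :=
        mul_le_mul_of_nonneg_left hfinal (div_nonneg hS0 hQpos.le)
    _ = 2 * (∑ i ∈ 𝒩 j, (q i / Q) * w i ^ 2) * ∫ ω, Real.sqrt ((cnt T ω : ℝ)) ∂μ := by
        rw [hcoef]; ring
end
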